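/- (Explicit Rayleigh's Monotonicity Law II) Let G be a finite connected weighted graph, let e_i be an edge of G with endpoints p_i, q_i and length L_i, and let G' be obtained from G by replacing e_i by an edge e_i' of length L_i' between the same endpoints. If e_i is not a bridge, then for all vertices s, t of G: r_G(s,t) = r_{G'}(s,t) + ((L_i − L_i')/((L_i+R_i)(L_i'+R_i)))·( j_{p_i}^{G−e_i}(q_i,s) − j_{p_i}^{G−e_i}(q_i,t) )². If e_i is a bridge, then r_G(s,t) = r_{G'}(s,t) when s and t lie in the same connected component of G−e_i, and r_G(s,t) = r_{G'}(s,t) + L_i − L_i' otherwise. -/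

import Mathlib

open scoped Classical

/-- A finite weighted multigraph (resistive electrical network): finitely many
vertices and edges; each edge `e` has two endpoints `ends e` and a positive
length (resistance) `len e`.  Multiple edges and self-loops are allowed. -/
structure WMG where
  V : Type
  E : Type
  instV : Fintype V
  instE : Fintype E
  ends : E → V × V
  len : E → ℝ
  len_pos : ∀ e, 0 < len e

attribute [instance] WMG.instV WMG.instE

/-- The Moore–Penrose pseudoinverse of a real square matrix, characterized by
the four Penrose equations (it exists and is unique for real matrices). -/
noncomputable def Matrix.mpinv {n : Type} [Fintype n] (A : Matrix n n ℝ) : Matrix n n ℝ :=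
  if h : ∃ B : Matrix n n ℝ,
      A * B * A = A ∧ B * A * B = B ∧ Matrix.transpose (A * B) = A * B ∧ Matrix.transpose (B * A) = B * A
  then h.choose else 0

namespace WMG

/-- Indicator function. -/
noncomputable def ind {α : Type} (x y : α) : ℝ := if x = y then 1 else 0

/-- The weighted Laplacian: an edge `e` with endpoints `a, b` contributes
`(1/len e) * (δ_{ua} - δ_{ub}) * (δ_{va} - δ_{vb})` to the `(u,v)` entry.  So
the off-diagonal `(u,v)` entry is `-∑ 1/len e` over the edges joining `u` and
`v`, and all row sums are zero. -/
noncomputable def lap (G : WMG) : Matrix G.V G.V ℝ :=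
  ∑ e : G.E, (G.len e)⁻¹ •
    Matrix.of (fun u v : G.V =>
      (ind u (G.ends e).1 - ind u (G.ends e).2) *
      (ind v (G.ends e).1 - ind v (G.ends e).2))

/-- Effective resistance `r(p,q) = L⁺pp - 2·L⁺pq + L⁺qq`. -/
noncomputable def res (G : WMG) (p q : G.V) : ℝ :=
  G.lap.mpinv p p - 2 * G.lap.mpinv p q + G.lap.mpinv q q

/-- Voltage function `j_p(q,s) = L⁺pp - L⁺pq - L⁺ps + L⁺qs`. -/
noncomputable def volt (G : WMG) (p q s : G.V) : ℝ :=
  G.lap.mpinv p p - G.lap.mpinv p q - G.lap.mpinv p s + G.lap.mpinv q s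

/-- Two vertices are adjacent if some edge has them as its endpoints. -/
def Adj (G : WMG) (u v : G.V) : Prop :=
  ∃ e : G.E, G.ends e = (u, v) ∨ G.ends e = (v, u)

/-- `u` and `v` are joined by a walk in `G`. -/
def Reach (G : WMG) (u v : G.V) : Prop := Relation.ReflTransGen G.Adj u v

/-- `G` is connected. -/
def Connected (G : WMG) : Prop := Nonempty G.V ∧ ∀ u v : G.V, G.Reach u v

/-- Quotient graph: identify vertices along (the equivalence generated by) the
relation `r`; all edges are kept. -/
noncomputable def quot (G : WMG) (r : G.V → G.V → Prop) : WMG where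
  V := Quot r
  E := G.E
  instV := Fintype.ofFinite _
  instE := G.instE
  ends e := (Quot.mk r (G.ends e).1, Quot.mk r (G.ends e).2)
  len := G.len
  len_pos := G.len_pos

/-- The canonical map from the vertices of `G` to those of a quotient of `G`. -/
def quotMap (G : WMG) (r : G.V → G.V → Prop) : G.V → (G.quot r).V := Quot.mk r

/-- `G_{pq}`: identify the vertices `p` and `q`. -/
noncomputable def ident2 (G : WMG) (p q : G.V) : WMG :=
  G.quot (fun x y => x = p ∧ y = q)

def ident2Map (G : WMG) (p q : G.V) : G.V → (G.ident2 p q).V :=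
  G.quotMap _

/-- `G_{pqs}`: identify the vertices `p`, `q`, `s` into a single vertex. -/
noncomputable def ident3 (G : WMG) (p q s : G.V) : WMG :=
  G.quot (fun x y => (x = p ∧ y = q) ∨ (x = p ∧ y = s))

/-- `G_{pq,st}`: identify `p` with `q` and, separately, `s` with `t`. -/
noncomputable def ident22 (G : WMG) (p q s t : G.V) : WMG :=
  G.quot (fun x y => (x = p ∧ y = q) ∨ (x = s ∧ y = t))

/-- `G_S`: identify all vertices in the set `S` into a single vertex. -/
noncomputable def identSet (G : WMG) (S : Set G.V) : WMG :=
  G.quot (fun x y => x ∈ S ∧ y ∈ S)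

/-- `G − e`: delete the edge `e` (keeping all vertices). -/
noncomputable def delete (G : WMG) (e : G.E) : WMG where
  V := G.V
  E := {f : G.E // f ≠ e}
  instV := G.instV
  instE := Fintype.ofFinite _
  ends f := G.ends f.1
  len f := G.len f.1
  len_pos f := G.len_pos f.1

/-- `e` is a bridge if `G − e` is disconnected. -/
def IsBridge (G : WMG) (e : G.E) : Prop := ¬ (G.delete e).Connected

/-- `Ḡ_e`: contract the edge `e` (identify its endpoints and delete it). -/
noncomputable def contract (G : WMG) (e : G.E) : WMG :=
  (G.delete e).quot (fun x y => x = (G.ends e).1 ∧ y = (G.ends e).2)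

def contractMap (G : WMG) (e : G.E) : G.V → (G.contract e).V := Quot.mk _

/-- Replace the length of the edge `e` by `L'`. -/
noncomputable def setLen (G : WMG) (e : G.E) (L' : ℝ) (hL' : 0 < L') : WMG where
  V := G.V
  E := G.E
  instV := G.instV
  instE := G.instE
  ends := G.ends
  len f := if f = e then L' else G.len f
  len_pos f := by
    by_cases hf : f = e
    · simpa [hf] using hL'
    · simpa [hf] using G.len_pos f

/-- `T` is (the edge set of) a spanning tree of `G`: using only edges of `T`
any two vertices are joined, and `T` has (number of vertices) − 1 edges. -/
def IsSpanningTree (G : WMG) (T : Finset G.E) : Prop :=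
  (∀ u v : G.V, Relation.ReflTransGen
      (fun x y => ∃ e ∈ T, G.ends e = (x, y) ∨ G.ends e = (y, x)) u v) ∧
  T.card = Fintype.card G.V - 1

/-- `t G`: the number of spanning trees of `G` (equals `1` for a one-vertex
graph; self-loops contribute nothing). -/
noncomputable def t (G : WMG) : ℕ := Nat.card {T : Finset G.E // G.IsSpanningTree T}

/-- `t(G_{pq})`, with the convention `t(G_{pp}) = 0`. -/
noncomputable def t2 (G : WMG) (p q : G.V) : ℕ :=
  if p = q then 0 else (G.ident2 p q).t

/-- Disjoint union of two graphs. -/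
noncomputable def disjUnion (G₁ G₂ : WMG) : WMG where
  V := G₁.V ⊕ G₂.V
  E := G₁.E ⊕ G₂.E
  instV := inferInstance
  instE := inferInstance
  ends := Sum.elim (fun e => (Sum.inl (G₁.ends e).1, Sum.inl (G₁.ends e).2))
                   (fun e => (Sum.inr (G₂.ends e).1, Sum.inr (G₂.ends e).2))
  len := Sum.elim G₁.len G₂.len
  len_pos := by
    rintro (e | e)
    · exact G₁.len_pos e
    · exact G₂.len_pos e

/-- Glue `G₁` and `G₂` along two pairs of vertices (`p₁ ↔ p₂`, `q₁ ↔ q₂`):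
the result is the graph `G = G₁ ∪ G₂` with `G₁ ∩ G₂ = {p, q}` (the two pieces
share exactly these two vertices and no edges). -/
noncomputable def glue2 (G₁ G₂ : WMG) (p₁ q₁ : G₁.V) (p₂ q₂ : G₂.V) : WMG :=
  (G₁.disjUnion G₂).quot (fun x y =>
    (x = Sum.inl p₁ ∧ y = Sum.inr p₂) ∨ (x = Sum.inl q₁ ∧ y = Sum.inr q₂))

/-- Glue `G₁` and `G₂` along three pairs of vertices: the result is the graph
`G = G₁ ∪ G₂` with `G₁ ∩ G₂ = {p, q, s}`. -/
noncomputable def glue3 (G₁ G₂ : WMG) (p₁ q₁ s₁ : G₁.V) (p₂ q₂ s₂ : G₂.V) : WMG :=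
  (G₁.disjUnion G₂).quot (fun x y =>
    (x = Sum.inl p₁ ∧ y = Sum.inr p₂) ∨ (x = Sum.inl q₁ ∧ y = Sum.inr q₂) ∨
    (x = Sum.inl s₁ ∧ y = Sum.inr s₂))

/-- Disjoint union of a finite family of graphs. -/
noncomputable def sigmaGraph {k : ℕ} (G : Fin k → WMG) : WMG where
  V := Σ i, (G i).V
  E := Σ i, (G i).E
  instV := inferInstance
  instE := inferInstance
  ends e := (⟨e.1, ((G e.1).ends e.2).1⟩, ⟨e.1, ((G e.1).ends e.2).2⟩)
  len e := (G e.1).len e.2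
  len_pos e := (G e.1).len_pos e.2

/-- Glue the family `G i` along a common pair of vertices (all the `p i` are
identified together, and all the `q i` are identified together): the result is
`G = ⋃ G_i` with `G_i ∩ G_j = {p, q}` for all `i ≠ j`. -/
noncomputable def glueFam {k : ℕ} (G : Fin k → WMG) (p q : ∀ i, (G i).V) : WMG :=
  (sigmaGraph G).quot (fun x y =>
    (∃ i j, x = ⟨i, p i⟩ ∧ y = ⟨j, p j⟩) ∨ (∃ i j, x = ⟨i, q i⟩ ∧ y = ⟨j, q j⟩))

/-- The cyclic successor on `Fin k`. -/
def finSucc {k : ℕ} (i : Fin k) : Fin k :=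
  ⟨(i.1 + 1) % k, Nat.mod_lt _ (Nat.lt_of_le_of_lt (Nat.zero_le _) i.2)⟩

/-- `CG_k`: replace the `i`-th edge of the cycle `C_k` by the graph `G i`,
identifying `t i` (of `G i`) with `s (i+1)` (of `G (i+1)`), cyclically. -/
noncomputable def cycleGlue {k : ℕ} (G : Fin k → WMG) (s t : ∀ i, (G i).V) : WMG :=
  (sigmaGraph G).quot (fun x y =>
    ∃ i, x = ⟨i, t i⟩ ∧ y = ⟨finSucc i, s (finSucc i)⟩)

/-- Join a new vertex `u` (the vertex `none`) to the vertex `p i` of `H` by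
`a i` parallel unit edges, for each `i`.  The resulting graph `G` has `H = G − u`,
and if `p` is injective with all `a i ≥ 1` then `N_G(u) = {p 1, …, p n}` with
`a i` parallel edges joining `u` to `p i`. -/
noncomputable def cone (H : WMG) {n : ℕ} (p : Fin n → H.V) (a : Fin n → ℕ) : WMG where
  V := Option H.V
  E := H.E ⊕ (Σ i : Fin n, Fin (a i))
  instV := inferInstance
  instE := inferInstance
  ends := Sum.elim (fun e => (some (H.ends e).1, some (H.ends e).2))
                   (fun e => (none, some (p e.1)))
  len := Sum.elim H.len (fun _ => 1)
  len_pos := by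
    rintro (e | e)
    · exact H.len_pos e
    · exact one_pos

/-- The path graph `P_n` on `n` vertices `0, 1, …, n-1`, unit edge lengths. -/
noncomputable def path (n : ℕ) : WMG where
  V := Fin n
  E := Fin (n - 1)
  instV := inferInstance
  instE := inferInstance
  ends i := (⟨i.1, by have := i.2; omega⟩, ⟨i.1 + 1, by have := i.2; omega⟩)
  len _ := 1
  len_pos _ := one_pos

/-- The cycle graph `C_n` on `n` vertices, unit edge lengths. -/
noncomputable def cycle (n : ℕ) : WMG where
  V := Fin n
  E := Fin n
  instV := inferInstance
  instE := inferInstance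
  ends i := (i, finSucc i)
  len _ := 1
  len_pos _ := one_pos

/-- The modified fan graph `F̄an_n`: the path `P_n` together with one new hub
vertex joined to each path vertex by `a` parallel edges. -/
noncomputable def fanGraph (n a : ℕ) : WMG :=
  (path n).cone (fun i : Fin n => i) (fun _ => a)

/-- The modified wheel graph `W̄_n`: the cycle `C_n` together with one new hub
vertex joined to each cycle vertex by `a` parallel edges. -/
noncomputable def wheelGraph (n a : ℕ) : WMG :=
  (cycle n).cone (fun i : Fin n => i) (fun _ => a)

end WMG

/-- The Morgan–Voyce polynomial `B_m(x) = ∑_{k=0}^m C(m+k+1, m−k) x^k`. -/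
noncomputable def morganVoyce (m : ℕ) (x : ℝ) : ℝ :=
  ∑ k ∈ Finset.range (m + 1), (Nat.choose (m + k + 1) (m - k) : ℝ) * x ^ k

/-- The polynomial `W_m(x) = ∑_{k=0}^m ((2m+2)/(m+2+k)) C(m+2+k, m−k) x^k`. -/
noncomputable def wheelPoly (m : ℕ) (x : ℝ) : ℝ :=
  ∑ k ∈ Finset.range (m + 1),
    ((2 * m + 2 : ℝ) / (m + 2 + k : ℝ)) * (Nat.choose (m + 2 + k) (m - k) : ℝ) * x ^ k

/-- The Lucas numbers: `L₀ = 2`, `L₁ = 1`, `L_{m+2} = L_m + L_{m+1}`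
(so `L₂ = 3`). -/
def lucas : ℕ → ℕ
  | 0 => 2
  | 1 => 1
  | n + 2 => lucas n + lucas (n + 1)


/-!
The effective resistance is a potential difference: if `L_G v = δ_s - δ_t` then
`r_G(s,t) = v_s - v_t`. Changing the length of `e = pq` from `L'` to `L` changes
`L_G = L_{G-e} + L'⁻¹ d dᵀ`, `d = δ_p - δ_q`, by a rank-one term, and (Sherman–Morrison) a
potential for the new graph is obtained from one for the old graph by adding a multiple of any
`u` with `L_{G-e} u ∈ ℝ d`. If `e` is not a bridge, take for `u` the voltage `L_{G-e}⁺ d`, for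
which `d ⬝ u = r_{G-e}(p,q)`; if `e` is a bridge, take the indicator of the component of `p` in
`G - e`, for which `L_{G-e} u = 0` and `d ⬝ u = 1`. For a connected graph the pseudoinverse is
`L⁺ = (L + J/n)⁻¹ - J/n`, which is what links `r` and `j` to potentials.
-/

open Matrix

namespace Matrix

variable {n : Type} [Fintype n]

theorem mpinv_eq_of_penrose {A B : Matrix n n ℝ} (h₁ : A * B * A = A) (h₂ : B * A * B = B)
    (h₃ : (A * B)ᵀ = A * B) (h₄ : (B * A)ᵀ = B * A) : A.mpinv = B := by
  have hex : ∃ C : Matrix n n ℝ,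
      A * C * A = A ∧ C * A * C = C ∧ (A * C)ᵀ = A * C ∧ (C * A)ᵀ = C * A :=
    ⟨B, h₁, h₂, h₃, h₄⟩
  rw [mpinv, dif_pos hex]
  obtain ⟨c₁, c₂, c₃, c₄⟩ := hex.choose_spec
  set C := hex.choose
  have hAC : A * C = A * B :=
    calc A * C = (A * B * A) * C := by rw [h₁]
      _ = (A * B)ᵀ * (A * C)ᵀ := by rw [h₃, c₃, Matrix.mul_assoc]
      _ = (A * C * A * B)ᵀ := by simp only [transpose_mul, Matrix.mul_assoc]
      _ = A * B := by rw [c₁, h₃]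
  have hCA : C * A = B * A :=
    calc C * A = C * (A * B * A) := by rw [h₁]
      _ = (C * A)ᵀ * (B * A)ᵀ := by rw [c₄, h₄, Matrix.mul_assoc, Matrix.mul_assoc]
      _ = (B * (A * C * A))ᵀ := by simp only [transpose_mul, Matrix.mul_assoc]
      _ = B * A := by rw [c₁, h₄]
  calc C = C * A * C := c₂.symm
    _ = B * A * B := by rw [hCA, Matrix.mul_assoc, hAC, ← Matrix.mul_assoc]
    _ = B := h₂

section KernelProjection

/- The hypotheses below say that `K` is the orthogonal projection onto `ker A`. -/
variable {A K : Matrix n n ℝ} (hA : Aᵀ = A) (hK : Kᵀ = K)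
include hA hK

theorem inv_add_sub_transpose : ((A + K)⁻¹ - K)ᵀ = (A + K)⁻¹ - K := by
  rw [transpose_sub, transpose_nonsing_inv, transpose_add, hA, hK]

variable (hKK : K * K = K) (hAK : A * K = 0) (hdet : IsUnit (A + K).det)
include hKK hAK hdet

theorem proj_mul_inv_add_sub : K * ((A + K)⁻¹ - K) = 0 := by
  have hKA : K * (A + K) = K := by
    rw [Matrix.mul_add, hKK, ← hK, ← hA, ← transpose_mul, hAK, transpose_zero, zero_add]
  rw [Matrix.mul_sub, hKK]
  nth_rewrite 1 [← hKA]
  rw [Matrix.mul_assoc, mul_nonsing_inv _ hdet, Matrix.mul_one, sub_self]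

theorem mul_inv_add_sub : A * ((A + K)⁻¹ - K) = 1 - K := by
  calc A * ((A + K)⁻¹ - K) = (A + K) * ((A + K)⁻¹ - K) - K * ((A + K)⁻¹ - K) := by
        rw [Matrix.add_mul, add_sub_cancel_right]
    _ = 1 - K := by
      rw [proj_mul_inv_add_sub hA hK hKK hAK hdet, Matrix.mul_sub, mul_nonsing_inv _ hdet,
        Matrix.add_mul, hAK, hKK, zero_add, sub_zero]

theorem inv_add_sub_mul : ((A + K)⁻¹ - K) * A = 1 - K := by
  rw [← inv_add_sub_transpose hA hK, ← hA, ← transpose_mul, hA,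
    mul_inv_add_sub hA hK hKK hAK hdet, transpose_sub, transpose_one, hK]

theorem mpinv_eq_inv_add_sub : A.mpinv = (A + K)⁻¹ - K := by
  have hAB := mul_inv_add_sub hA hK hKK hAK hdet
  have hBA := inv_add_sub_mul hA hK hKK hAK hdet
  have hKA : K * A = 0 := by rw [← hK, ← hA, ← transpose_mul, hAK, transpose_zero]
  refine mpinv_eq_of_penrose ?_ ?_ ?_ ?_
  · rw [hAB, Matrix.sub_mul, Matrix.one_mul, hKA, sub_zero]
  · rw [hBA, Matrix.sub_mul, Matrix.one_mul, proj_mul_inv_add_sub hA hK hKK hAK hdet,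
      sub_zero]
  · rw [hAB, transpose_sub, transpose_one, hK]
  · rw [hBA, transpose_sub, transpose_one, hK]

end KernelProjection

theorem add_inv_smul_vecMulVec_mulVec (A : Matrix n n ℝ) (d w : n → ℝ) (L : ℝ) :
    (A + L⁻¹ • vecMulVec d d) *ᵥ w = A *ᵥ w + (L⁻¹ * (d ⬝ᵥ w)) • d := by
  rw [add_mulVec, smul_mulVec, vecMulVec_mulVec, op_smul_eq_smul, smul_smul]

theorem add_inv_smul_vecMulVec_mulVec_add_smul {A : Matrix n n ℝ} (hA : Aᵀ = A)
    {d u v x : n → ℝ} {c L L' : ℝ} (hu : A *ᵥ u = c • d) (hL : L ≠ 0) (hL' : L' ≠ 0)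
    (hLu : c * L + d ⬝ᵥ u ≠ 0) (hL'u : c * L' + d ⬝ᵥ u ≠ 0)
    (hv : (A + L'⁻¹ • vecMulVec d d) *ᵥ v = x) :
    (A + L⁻¹ • vecMulVec d d) *ᵥ
        (v + ((L - L') * (u ⬝ᵥ x) / ((c * L + d ⬝ᵥ u) * (c * L' + d ⬝ᵥ u))) • u) = x := by
  have hdv : (c * L' + d ⬝ᵥ u) * (d ⬝ᵥ v) = L' * (u ⬝ᵥ x) := by
    have hAuv : u ⬝ᵥ (A *ᵥ v) = c * (d ⬝ᵥ v) := by
      rw [dotProduct_mulVec, ← mulVec_transpose, hA, hu, smul_dotProduct, smul_eq_mul]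
    have hux := congrArg (u ⬝ᵥ ·) hv
    simp only [add_inv_smul_vecMulVec_mulVec, dotProduct_add, dotProduct_smul, hAuv,
      smul_eq_mul] at hux
    rw [← hux, dotProduct_comm u d]
    field_simp
  set α := (L - L') * (u ⬝ᵥ x) / ((c * L + d ⬝ᵥ u) * (c * L' + d ⬝ᵥ u)) with hα
  rw [add_inv_smul_vecMulVec_mulVec] at hv ⊢
  conv_rhs => rw [← hv]
  rw [mulVec_add, mulVec_smul, hu, dotProduct_add, dotProduct_smul, smul_smul, smul_eq_mul,
    add_assoc, ← add_smul]
  congr 2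
  rw [hα, mul_comm c L] at *
  rw [mul_comm c L'] at hL'u
  field_simp
  linear_combination (L' - L) * (L * c + d ⬝ᵥ u) * hdv

end Matrix

noncomputable def dipole {V : Type} (a b : V) : V → ℝ := Pi.single a 1 - Pi.single b 1

noncomputable def meanProj (n : Type) [Fintype n] : Matrix n n ℝ :=
  Matrix.of fun _ _ => (Fintype.card n : ℝ)⁻¹

section Vectors

variable {n : Type} [Fintype n]

theorem dipole_dotProduct (a b : n) (v : n → ℝ) : dipole a b ⬝ᵥ v = v a - v b := by
  simp [dipole, sub_dotProduct]

theorem mulVec_dipole_apply (M : Matrix n n ℝ) (a b i : n) :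
    (M *ᵥ dipole a b) i = M i a - M i b := by
  simp [dipole, mulVec_sub]

theorem sum_dipole (a b : n) : ∑ i, dipole a b i = 0 := by
  simp [dipole, Finset.sum_sub_distrib]

theorem meanProj_transpose : (meanProj n)ᵀ = meanProj n := by
  ext
  simp [meanProj]

theorem meanProj_mulVec (v : n → ℝ) :
    meanProj n *ᵥ v = fun _ => (Fintype.card n : ℝ)⁻¹ * ∑ i, v i := by
  ext
  simp [meanProj, mulVec, dotProduct, Finset.mul_sum]

theorem meanProj_mul_self [Nonempty n] : meanProj n * meanProj n = meanProj n := by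
  ext
  simp [meanProj, mul_apply]

theorem dotProduct_meanProj_mulVec (v : n → ℝ) :
    v ⬝ᵥ (meanProj n *ᵥ v) = (Fintype.card n : ℝ)⁻¹ * (∑ i, v i) ^ 2 := by
  simp [meanProj_mulVec, dotProduct, ← Finset.sum_mul]
  ring

end Vectors

namespace WMG

variable (G : WMG)

theorem lap_eq_sum :
    G.lap = ∑ e, (G.len e)⁻¹ •
      vecMulVec (dipole (G.ends e).1 (G.ends e).2) (dipole (G.ends e).1 (G.ends e).2) := by
  refine Finset.sum_congr rfl fun e _ => ?_
  ext u v
  simp [ind, dipole, Pi.single_apply, vecMulVec_apply]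

theorem lap_transpose : G.lapᵀ = G.lap := by
  simp only [lap_eq_sum, transpose_sum, transpose_smul, transpose_vecMulVec]

theorem lap_mulVec (v : G.V → ℝ) :
    G.lap *ᵥ v = ∑ e, ((G.len e)⁻¹ * (v (G.ends e).1 - v (G.ends e).2)) •
      dipole (G.ends e).1 (G.ends e).2 := by
  simp only [lap_eq_sum, sum_mulVec, smul_mulVec, vecMulVec_mulVec, op_smul_eq_smul,
    dipole_dotProduct, smul_smul]

theorem lap_mulVec_eq_zero {v : G.V → ℝ} (hv : ∀ e, v (G.ends e).1 = v (G.ends e).2) :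
    G.lap *ᵥ v = 0 := by
  simp [lap_mulVec, hv]

theorem dotProduct_lap_mulVec (v : G.V → ℝ) :
    v ⬝ᵥ (G.lap *ᵥ v) = ∑ e, (G.len e)⁻¹ * (v (G.ends e).1 - v (G.ends e).2) ^ 2 := by
  rw [lap_mulVec, dotProduct_sum]
  refine Finset.sum_congr rfl fun e _ => ?_
  rw [dotProduct_smul, dotProduct_comm, dipole_dotProduct, smul_eq_mul]
  ring

theorem dotProduct_lap_mulVec_nonneg (v : G.V → ℝ) : 0 ≤ v ⬝ᵥ (G.lap *ᵥ v) := by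
  rw [dotProduct_lap_mulVec]
  exact Finset.sum_nonneg fun e _ => mul_nonneg (inv_nonneg.2 (G.len_pos e).le) (sq_nonneg _)

theorem lap_mul_meanProj : G.lap * meanProj G.V = 0 := by
  ext i j
  have h := congrFun (G.lap_mulVec_eq_zero (v := fun _ => 1) fun _ => rfl) i
  simp only [mulVec, dotProduct, mul_one, Pi.zero_apply] at h
  simp [meanProj, mul_apply, ← Finset.sum_mul, h]

/- `(G.delete e).V` is only definitionally `G.V`; the retyping lets the Laplacian of `G - e` be
added to matrices of `G`. -/
noncomputable def lapDelete (e : G.E) : Matrix G.V G.V ℝ := (G.delete e).lap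

theorem lap_eq_lapDelete_add (e : G.E) :
    G.lap = G.lapDelete e + (G.len e)⁻¹ •
      vecMulVec (dipole (G.ends e).1 (G.ends e).2) (dipole (G.ends e).1 (G.ends e).2) := by
  rw [lapDelete, lap_eq_sum, lap_eq_sum, ← Finset.sum_erase_add _ _ (Finset.mem_univ e)]
  congr 1
  exact Finset.sum_subtype _ (by simp) _

theorem lap_setLen (e : G.E) {L' : ℝ} (hL' : 0 < L') :
    (G.setLen e L' hL').lap = G.lapDelete e + L'⁻¹ •
      vecMulVec (dipole (G.ends e).1 (G.ends e).2) (dipole (G.ends e).1 (G.ends e).2) := by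
  rw [lap_eq_sum]
  show ∑ f : G.E, (if f = e then L' else G.len f)⁻¹ •
    vecMulVec (dipole (G.ends f).1 (G.ends f).2) (dipole (G.ends f).1 (G.ends f).2) = _
  rw [← Finset.sum_erase_add _ _ (Finset.mem_univ e), if_pos rfl, lapDelete, lap_eq_sum]
  congr 1
  rw [Finset.sum_subtype _ (p := (· ≠ e)) (by simp)]
  exact Finset.sum_congr rfl fun f _ => by rw [if_neg f.2]; rfl

noncomputable def reachInd (a : G.V) : G.V → ℝ := fun u => if G.Reach u a then 1 else 0

variable {G}

theorem Reach.symm {a b : G.V} (h : G.Reach a b) : G.Reach b a :=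
  have : Std.Symm G.Adj := ⟨fun _ _ ⟨e, he⟩ => ⟨e, he.symm⟩⟩
  Std.Symm.symm (r := Relation.ReflTransGen G.Adj) _ _ h

theorem Reach.apply_eq {v : G.V → ℝ} (hv : ∀ e, v (G.ends e).1 = v (G.ends e).2) {a b : G.V}
    (h : G.Reach a b) : v a = v b := by
  induction h with
  | refl => rfl
  | tail _ hadj ih =>
    obtain ⟨e, he | he⟩ := hadj
    · have := hv e
      rw [he] at this
      exact ih.trans this
    · have := hv e
      rw [he] at this
      exact ih.trans this.symm

theorem reachInd_ends (a : G.V) (e : G.E) :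
    G.reachInd a (G.ends e).1 = G.reachInd a (G.ends e).2 := by
  have hr : G.Reach (G.ends e).1 (G.ends e).2 := .single ⟨e, Or.inl rfl⟩
  have : G.Reach (G.ends e).1 a ↔ G.Reach (G.ends e).2 a := ⟨hr.symm.trans, hr.trans⟩
  simp [reachInd, this]

theorem lap_mulVec_reachInd (a : G.V) : G.lap *ᵥ G.reachInd a = 0 :=
  G.lap_mulVec_eq_zero (reachInd_ends a)

theorem reachInd_eq_of_reach (a : G.V) {s t : G.V} (h : G.Reach s t) :
    G.reachInd a s = G.reachInd a t :=
  h.apply_eq (reachInd_ends a)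

theorem Connected.reach_delete_or (hG : G.Connected) (e : G.E) (v : G.V) :
    (G.delete e).Reach v (G.ends e).1 ∨ (G.delete e).Reach v (G.ends e).2 := by
  induction hG.2 v (G.ends e).1 using Relation.ReflTransGen.head_induction_on with
  | refl => exact Or.inl Relation.ReflTransGen.refl
  | head hadj _ ih =>
    obtain ⟨f, hf⟩ := hadj
    by_cases hfe : f = e
    · subst hfe
      rcases hf with hf | hf <;> simp only [hf]
      exacts [Or.inl .refl, Or.inr .refl]
    · exact ih.imp (Relation.ReflTransGen.head ⟨⟨f, hfe⟩, hf⟩)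
        (Relation.ReflTransGen.head ⟨⟨f, hfe⟩, hf⟩)

theorem Connected.not_reach_of_isBridge (hG : G.Connected) {e : G.E} (hb : G.IsBridge e) :
    ¬ (G.delete e).Reach (G.ends e).2 (G.ends e).1 := by
  intro hqp
  have hp : ∀ v, (G.delete e).Reach v (G.ends e).1 := fun v =>
    (hG.reach_delete_or e v).elim id (Relation.ReflTransGen.trans · hqp)
  exact hb ⟨hG.1, fun u v => (hp u).trans (hp v).symm⟩

theorem Connected.sub_reachInd_sq_of_not_reach (hG : G.Connected) (e : G.E) {s t : G.V}
    (hst : ¬ (G.delete e).Reach s t) :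
    ((G.delete e).reachInd (G.ends e).1 s - (G.delete e).reachInd (G.ends e).1 t) ^ 2 = 1 := by
  by_cases hs : (G.delete e).Reach s (G.ends e).1 <;>
    by_cases ht : (G.delete e).Reach t (G.ends e).1 <;> simp only [reachInd, hs, ht, if_true,
      if_false] <;> norm_num
  · exact hst (hs.trans ht.symm)
  · exact hst (((hG.reach_delete_or e s).resolve_left hs).trans
      ((hG.reach_delete_or e t).resolve_left ht).symm)

theorem Connected.apply_eq_of_dotProduct_lap_mulVec_eq_zero (hG : G.Connected) {v : G.V → ℝ}
    (hv : v ⬝ᵥ (G.lap *ᵥ v) = 0) (a b : G.V) : v a = v b := by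
  rw [dotProduct_lap_mulVec, Finset.sum_eq_zero_iff_of_nonneg fun e _ =>
    mul_nonneg (inv_nonneg.2 (G.len_pos e).le) (sq_nonneg _)] at hv
  refine Reach.apply_eq (fun e => ?_) (hG.2 a b)
  simpa [(G.len_pos e).ne', sub_eq_zero] using hv e (Finset.mem_univ e)

theorem Connected.isUnit_det_lap_add_meanProj (hG : G.Connected) :
    IsUnit (G.lap + meanProj G.V).det := by
  have : Nonempty G.V := hG.1
  rw [isUnit_iff_ne_zero]
  intro hdet
  obtain ⟨v, hv0, hv⟩ := exists_mulVec_eq_zero_iff.mpr hdet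
  have hsum : v ⬝ᵥ (G.lap *ᵥ v) + (Fintype.card G.V : ℝ)⁻¹ * (∑ i, v i) ^ 2 = 0 := by
    rw [← dotProduct_meanProj_mulVec, ← dotProduct_add, ← add_mulVec, hv, dotProduct_zero]
  have hmean : 0 ≤ (Fintype.card G.V : ℝ)⁻¹ * (∑ i, v i) ^ 2 := by positivity
  have hlap := G.dotProduct_lap_mulVec_nonneg v
  have hconst := hG.apply_eq_of_dotProduct_lap_mulVec_eq_zero (v := v) (by linarith)
  have hsum0 : ∑ i, v i = 0 := by
    have h : (Fintype.card G.V : ℝ)⁻¹ * (∑ i, v i) ^ 2 = 0 := by linarith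
    simpa using h
  obtain ⟨a⟩ := hG.1
  rw [Finset.sum_congr rfl fun i _ => hconst i a] at hsum0
  simp only [Finset.sum_const, Finset.card_univ, nsmul_eq_mul, mul_eq_zero,
    Nat.cast_eq_zero] at hsum0
  exact hv0 (funext fun i => (hconst i a).trans (hsum0.resolve_left Fintype.card_ne_zero))

theorem Connected.mpinv_lap (hG : G.Connected) :
    G.lap.mpinv = (G.lap + meanProj G.V)⁻¹ - meanProj G.V :=
  have : Nonempty G.V := hG.1
  mpinv_eq_inv_add_sub G.lap_transpose meanProj_transpose meanProj_mul_self G.lap_mul_meanProj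
    hG.isUnit_det_lap_add_meanProj

theorem Connected.lap_mul_mpinv (hG : G.Connected) : G.lap * G.lap.mpinv = 1 - meanProj G.V :=
  have : Nonempty G.V := hG.1
  hG.mpinv_lap ▸ mul_inv_add_sub G.lap_transpose meanProj_transpose meanProj_mul_self
    G.lap_mul_meanProj hG.isUnit_det_lap_add_meanProj

theorem Connected.mpinv_mul_lap (hG : G.Connected) : G.lap.mpinv * G.lap = 1 - meanProj G.V :=
  have : Nonempty G.V := hG.1
  hG.mpinv_lap ▸ inv_add_sub_mul G.lap_transpose meanProj_transpose meanProj_mul_self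
    G.lap_mul_meanProj hG.isUnit_det_lap_add_meanProj

theorem Connected.mpinv_lap_apply_comm (hG : G.Connected) (a b : G.V) :
    G.lap.mpinv a b = G.lap.mpinv b a := by
  rw [← transpose_apply G.lap.mpinv b a, hG.mpinv_lap,
    inv_add_sub_transpose G.lap_transpose meanProj_transpose]

theorem Connected.lap_mulVec_mpinv_mulVec (hG : G.Connected) {x : G.V → ℝ}
    (hx : ∑ i, x i = 0) : G.lap *ᵥ (G.lap.mpinv *ᵥ x) = x := by
  rw [mulVec_mulVec, hG.lap_mul_mpinv, sub_mulVec, one_mulVec, meanProj_mulVec, hx, mul_zero]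
  exact sub_zero x

theorem Connected.res_eq_of_lap_mulVec (hG : G.Connected) {v : G.V → ℝ} {s t : G.V}
    (hv : G.lap *ᵥ v = dipole s t) : G.res s t = v s - v t := by
  have h := congrArg (G.lap.mpinv *ᵥ ·) hv
  simp only [mulVec_mulVec, hG.mpinv_mul_lap, sub_mulVec, one_mulVec, meanProj_mulVec] at h
  have hs := congrFun h s
  have ht := congrFun h t
  simp only [Pi.sub_apply, mulVec_dipole_apply] at hs ht
  rw [res, hG.mpinv_lap_apply_comm t s] at *
  linarith

theorem Connected.volt_sub_volt (hG : G.Connected) (p q s t : G.V) :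
    G.volt p q s - G.volt p q t =
      (G.lap.mpinv *ᵥ dipole p q) t - (G.lap.mpinv *ᵥ dipole p q) s := by
  simp only [volt, mulVec_dipole_apply]
  rw [hG.mpinv_lap_apply_comm p s, hG.mpinv_lap_apply_comm q s, hG.mpinv_lap_apply_comm p t,
    hG.mpinv_lap_apply_comm q t]
  ring

theorem Connected.res_eq_res_setLen_add (hG : G.Connected) {e : G.E} {L' : ℝ} (hL' : 0 < L')
    {u : G.V → ℝ} {c : ℝ} (hu : G.lapDelete e *ᵥ u = c • dipole (G.ends e).1 (G.ends e).2)
    (h : c * G.len e + dipole (G.ends e).1 (G.ends e).2 ⬝ᵥ u ≠ 0)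
    (h' : c * L' + dipole (G.ends e).1 (G.ends e).2 ⬝ᵥ u ≠ 0) (s t : G.V) :
    G.res s t = (G.setLen e L' hL').res s t +
      (G.len e - L') / ((c * G.len e + dipole (G.ends e).1 (G.ends e).2 ⬝ᵥ u) *
        (c * L' + dipole (G.ends e).1 (G.ends e).2 ⬝ᵥ u)) * (u s - u t) ^ 2 := by
  have hG' : (G.setLen e L' hL').Connected := hG
  obtain ⟨v', hv'⟩ : ∃ v' : G.V → ℝ, (G.setLen e L' hL').lap *ᵥ v' = dipole s t :=
    ⟨_, hG'.lap_mulVec_mpinv_mulVec (sum_dipole s t)⟩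
  have hv := add_inv_smul_vecMulVec_mulVec_add_smul (A := G.lapDelete e)
    (lap_transpose (G.delete e)) hu (G.len_pos e).ne' hL'.ne' h h' (G.lap_setLen e hL' ▸ hv')
  rw [← lap_eq_lapDelete_add] at hv
  rw [hG.res_eq_of_lap_mulVec hv, hG'.res_eq_of_lap_mulVec hv', dotProduct_comm,
    dipole_dotProduct]
  simp only [Pi.add_apply, Pi.smul_apply, smul_eq_mul]
  ring

theorem Connected.res_eq_of_not_isBridge (hG : G.Connected) {e : G.E} (hnb : ¬ G.IsBridge e)
    {L' : ℝ} (hL' : 0 < L') (s t : G.V) :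
    G.res s t = (G.setLen e L' hL').res s t +
      (G.len e - L') /
        ((G.len e + (G.delete e).res (G.ends e).1 (G.ends e).2) *
          (L' + (G.delete e).res (G.ends e).1 (G.ends e).2)) *
        ((G.delete e).volt (G.ends e).1 (G.ends e).2 s -
          (G.delete e).volt (G.ends e).1 (G.ends e).2 t) ^ 2 := by
  have hD : (G.delete e).Connected := not_not.mp hnb
  have hL := G.len_pos e
  set g : G.V → ℝ := (G.delete e).lap.mpinv *ᵥ dipole (G.ends e).1 (G.ends e).2
  have hg : G.lapDelete e *ᵥ g = dipole (G.ends e).1 (G.ends e).2 :=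
    hD.lap_mulVec_mpinv_mulVec (sum_dipole _ _)
  have hR : (G.delete e).res (G.ends e).1 (G.ends e).2 = dipole (G.ends e).1 (G.ends e).2 ⬝ᵥ g :=
    (hD.res_eq_of_lap_mulVec hg).trans (dipole_dotProduct _ _ _).symm
  have hR0 : 0 ≤ dipole (G.ends e).1 (G.ends e).2 ⬝ᵥ g := by
    rw [← hg, dotProduct_comm]
    exact (G.delete e).dotProduct_lap_mulVec_nonneg g
  have hvolt : (G.delete e).volt (G.ends e).1 (G.ends e).2 s -
      (G.delete e).volt (G.ends e).1 (G.ends e).2 t = g t - g s :=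
    hD.volt_sub_volt _ _ _ _
  rw [hvolt, hR, hG.res_eq_res_setLen_add hL' (c := 1) (by rwa [one_smul]) (by positivity)
    (by positivity) s t]
  ring

theorem Connected.res_eq_of_isBridge (hG : G.Connected) {e : G.E} (hb : G.IsBridge e)
    {L' : ℝ} (hL' : 0 < L') (s t : G.V) :
    G.res s t = (G.setLen e L' hL').res s t + (G.len e - L') *
      ((G.delete e).reachInd (G.ends e).1 s - (G.delete e).reachInd (G.ends e).1 t) ^ 2 := by
  set w : G.V → ℝ := (G.delete e).reachInd (G.ends e).1
  have hw : dipole (G.ends e).1 (G.ends e).2 ⬝ᵥ w = 1 := by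
    have hp : (G.delete e).Reach (G.ends e).1 (G.ends e).1 := .refl
    refine (dipole_dotProduct _ _ _).trans ?_
    simp only [w, reachInd, hp, hG.not_reach_of_isBridge hb, if_true, if_false, sub_zero]
  have key := hG.res_eq_res_setLen_add hL' (c := 0) (u := w)
    (by rw [zero_smul]; exact (G.delete e).lap_mulVec_reachInd _) (by simp [hw]) (by simp [hw]) s t
  simpa only [hw, zero_mul, zero_add, mul_one, div_one] using key

end WMG

/-- **Explicit Rayleigh's Monotonicity Law II.**  Let `G'` be obtained from
the finite connected weighted graph `G` by replacing the edge `e` (endpoints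
`p_i, q_i`, length `L_i`) by an edge of length `L_i'` between the same
endpoints.  If `e` is not a bridge, then for all vertices `s, t`:
`r_G(s,t) = r_{G'}(s,t) + ((L_i - L_i')/((L_i+R_i)(L_i'+R_i)))
              (j^{G-e}_{p_i}(q_i,s) - j^{G-e}_{p_i}(q_i,t))²`.
If `e` is a bridge, `r_G(s,t) = r_{G'}(s,t)` when `s, t` are in the same
connected component of `G − e`, and `r_G(s,t) = r_{G'}(s,t) + L_i - L_i'`
otherwise. -/
theorem explicit_rayleigh_monotonicity_law_II (G : WMG) (hG : G.Connected)
    (e : G.E) (L' : ℝ) (hL' : 0 < L') (s t : G.V) :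
    (¬ G.IsBridge e →
      G.res s t = (G.setLen e L' hL').res s t +
        ((G.len e - L') /
          ((G.len e + (G.delete e).res (G.ends e).1 (G.ends e).2) *
           (L' + (G.delete e).res (G.ends e).1 (G.ends e).2))) *
          ((G.delete e).volt (G.ends e).1 (G.ends e).2 s -
           (G.delete e).volt (G.ends e).1 (G.ends e).2 t) ^ 2) ∧
    (G.IsBridge e →
      ((G.delete e).Reach s t → G.res s t = (G.setLen e L' hL').res s t) ∧
      (¬ (G.delete e).Reach s t →
        G.res s t = (G.setLen e L' hL').res s t + G.len e - L')) := by
  refine ⟨fun hnb => hG.res_eq_of_not_isBridge hnb hL' s t,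
    fun hb => ⟨fun hst => ?_, fun hst => ?_⟩⟩
  · have hw : (G.delete e).reachInd (G.ends e).1 s = (G.delete e).reachInd (G.ends e).1 t :=
      (G.delete e).reachInd_eq_of_reach _ hst
    rw [hG.res_eq_of_isBridge hb hL' s t, hw]
    ring
  · rw [hG.res_eq_of_isBridge hb hL' s t, hG.sub_reachInd_sq_of_not_reach e hst]
    ring
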